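/- For every r ∈ ℕ with r·k₁ ≤ t₁ and all x, y ∈ ℂ, 𝓕₂⁽¹⁾(a, b₁ + r, b₂; c₁, c₂; t₁, t₂, k₁, k₂, x, y) = Σ_{s=0}^{r} binom(r,s) · ((a)_s (−1)^{s k₁} (−t₁)_{s k₁} / (c₁)_s) · x^s · 𝓕₂⁽¹⁾(a + s, b₁ + s, b₂; c₁ + s, c₂; t₁ − s k₁, t₂, k₁, k₂, x, y). -/

import Mathlib

/-!
Expand `(b₁ + r)_m` by the Chu–Vandermonde identity
`(b + r)_m = ∑ₛ C(r, s) · m(m-1)⋯(m-s+1) · (b + s)_{m-s}` and exchange the sums. In the `s`-th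
piece the terms with `m < s` vanish; writing `m = s + u`, the splittings `(a)_{s+u+n} = (a)_s (a+s)_{u+n}`,
`(c₁)_{s+u} = (c₁)_s (c₁+s)_u`, `(−t₁)_{(s+u)k₁} = (−t₁)_{sk₁} (−(t₁−sk₁))_{uk₁}` and
`m(m-1)⋯(m-s+1) / m! = 1 / u!` turn it into the shifted Appell function. Since `k₁ ≥ 1`, the factor
`(−t₁)_{(s+u)k₁}` vanishes exactly beyond `u = t₁ − sk₁`, the truncation point of that function.
-/

open Complex Finset

/-- Ascending Pochhammer symbol `(z)_j = z (z+1) ⋯ (z+j−1)`, with `(z)_0 = 1`. -/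
noncomputable def poch (z : ℂ) (j : ℕ) : ℂ := (ascPochhammer ℂ j).eval z

/-- The first discrete Appell function `𝓕₂⁽¹⁾(a,b₁,b₂;c₁,c₂;t₁,t₂,k₁,k₂,x,y)`.
Since `(−t₁)_{m k₁} = 0` once `m k₁ > t₁` and `(−t₂)_{n k₂} = 0` once `n k₂ > t₂`
(for `k₁, k₂ ≥ 1`), the doubly infinite sum reduces to this finite sum. -/
noncomputable def F2one (a b₁ b₂ c₁ c₂ : ℂ) (t₁ t₂ k₁ k₂ : ℕ) (x y : ℂ) : ℂ :=
  ∑ m ∈ Finset.range (t₁ + 1), ∑ n ∈ Finset.range (t₂ + 1),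
    poch a (m + n) * poch b₁ m * poch b₂ n * (-1 : ℂ) ^ (m * k₁) * poch (-(t₁ : ℂ)) (m * k₁)
      * (-1 : ℂ) ^ (n * k₂) * poch (-(t₂ : ℂ)) (n * k₂) * x ^ m * y ^ n
    / (poch c₁ m * poch c₂ n * (Nat.factorial m : ℂ) * (Nat.factorial n : ℂ))

lemma poch_add (z : ℂ) (p q : ℕ) : poch z (p + q) = poch z p * poch (z + p) q := by
  simpa [poch, Polynomial.eval_comp] using
    (congrArg (Polynomial.eval z) (ascPochhammer_mul (S := ℂ) p q)).symm

lemma poch_add_one_succ (z : ℂ) (m : ℕ) :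
    poch (z + 1) (m + 1) = poch z (m + 1) + (m + 1) * poch (z + 1) m := by
  simpa [poch, Polynomial.eval_comp] using
    congrArg (Polynomial.eval z) (ascPochhammer_succ_comp_X_add_one (S := ℂ) m)

lemma poch_neg_natCast_add {t p : ℕ} (hp : p ≤ t) (q : ℕ) :
    poch (-(t : ℂ)) (p + q) = poch (-(t : ℂ)) p * poch (-((t - p : ℕ) : ℂ)) q := by
  rw [poch_add, Nat.cast_sub hp]
  ring_nf

lemma poch_add_natCast_eq_sum (b : ℂ) (r : ℕ) : ∀ m : ℕ,
    poch (b + r) m =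
      ∑ s ∈ range (r + 1), (r.choose s : ℂ) * m.descFactorial s * poch (b + s) (m - s) := by
  induction r generalizing b with
  | zero => simp
  | succ r ih =>
    rintro (_ | m)
    · simp [sum_range_succ', poch]
    · have pascal := sum_choose_succ_mul (R := ℂ)
        (fun s _ => ((m + 1).descFactorial s : ℂ) * poch (b + s) (m + 1 - s)) r
      simp only [← mul_assoc] at pascal
      have hb : b + ((r + 1 : ℕ) : ℂ) = b + r + 1 := by push_cast; ring
      rw [pascal, ← ih b, hb, poch_add_one_succ, add_right_comm, ih (b + 1) m, mul_sum]
      congr 1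
      refine sum_congr rfl fun s _ => ?_
      rw [Nat.succ_descFactorial_succ, Nat.add_sub_add_right]
      push_cast
      ring_nf

lemma sum_range_eq_sum_range_add {M : Type*} [AddCommMonoid M] {f : ℕ → M} {s L N : ℕ}
    (hN : s + L ≤ N) (hlow : ∀ m < s, f m = 0) (hhigh : ∀ m, s + L ≤ m → f m = 0) :
    ∑ m ∈ range N, f m = ∑ u ∈ range L, f (s + u) := by
  calc ∑ m ∈ range N, f m = ∑ m ∈ Ico s (s + L), f m := by
        refine (sum_subset (fun m hm => ?_) fun m _ hm => ?_).symm
        · simp only [mem_Ico, mem_range] at hm ⊢; omega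
        · simp only [mem_Ico, not_and_or, not_le, not_lt] at hm
          exact hm.elim (hlow m) (hhigh m)
    _ = ∑ u ∈ range L, f (s + u) := by rw [sum_Ico_eq_sum_range, Nat.add_sub_cancel_left]

noncomputable def F2oneCoeff (a b₂ c₁ c₂ : ℂ) (t₁ t₂ k₁ k₂ : ℕ) (x y : ℂ) (m n : ℕ) : ℂ :=
  poch a (m + n) * poch b₂ n * (-1 : ℂ) ^ (m * k₁) * poch (-(t₁ : ℂ)) (m * k₁)
      * (-1 : ℂ) ^ (n * k₂) * poch (-(t₂ : ℂ)) (n * k₂) * x ^ m * y ^ n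
    / (poch c₁ m * poch c₂ n * (Nat.factorial m : ℂ) * (Nat.factorial n : ℂ))

section Coeff

variable (a b₁ b₂ c₁ c₂ : ℂ) (t₁ t₂ k₁ k₂ : ℕ) (x y : ℂ)

lemma F2one_eq_sum_poch_mul_coeff : F2one a b₁ b₂ c₁ c₂ t₁ t₂ k₁ k₂ x y =
    ∑ m ∈ range (t₁ + 1), ∑ n ∈ range (t₂ + 1),
      poch b₁ m * F2oneCoeff a b₂ c₁ c₂ t₁ t₂ k₁ k₂ x y m n := by
  unfold F2one F2oneCoeff
  refine sum_congr rfl fun m _ => sum_congr rfl fun n _ => ?_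
  ring

variable {a b₂ c₁ c₂ t₁ t₂ k₁ k₂ x y}

lemma F2oneCoeff_eq_zero {m : ℕ} (h : t₁ < m * k₁) (n : ℕ) :
    F2oneCoeff a b₂ c₁ c₂ t₁ t₂ k₁ k₂ x y m n = 0 := by
  simp [F2oneCoeff, poch, ascPochhammer_eval_neg_coe_nat_of_lt h]

lemma descFactorial_mul_F2oneCoeff_add {s : ℕ} (hs : s * k₁ ≤ t₁) (u n : ℕ) :
    ((s + u).descFactorial s : ℂ) * F2oneCoeff a b₂ c₁ c₂ t₁ t₂ k₁ k₂ x y (s + u) n =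
      poch a s * (-1 : ℂ) ^ (s * k₁) * poch (-(t₁ : ℂ)) (s * k₁) / poch c₁ s * x ^ s *
        F2oneCoeff (a + s) b₂ (c₁ + s) c₂ (t₁ - s * k₁) t₂ k₁ k₂ x y u n := by
  have hsu : s ≤ s + u := Nat.le_add_right s u
  have hfac : ((s + u).descFactorial s : ℂ) * ((s + u).factorial : ℂ)⁻¹ = (u.factorial : ℂ)⁻¹ := by
    have h := Nat.factorial_mul_descFactorial hsu
    rw [Nat.add_sub_cancel_left] at h
    rw [← h, Nat.cast_mul, mul_inv, ← mul_assoc, mul_right_comm,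
      mul_inv_cancel₀ (by exact_mod_cast (Nat.descFactorial_pos.mpr hsu).ne'), one_mul]
  unfold F2oneCoeff
  rw [add_assoc, poch_add a, add_mul, pow_add, poch_neg_natCast_add hs, poch_add c₁, pow_add]
  simp only [div_eq_mul_inv, mul_inv]
  rw [← hfac]
  ring

end Coeff

theorem finite_summation_formula_general (a b₁ b₂ c₁ c₂ : ℂ) (k₁ k₂ : ℕ)
    (hk₁ : 0 < k₁)
    (t₁ t₂ : ℕ) (r : ℕ) (hr : r * k₁ ≤ t₁) (x y : ℂ) :
    F2one a (b₁ + r) b₂ c₁ c₂ t₁ t₂ k₁ k₂ x y =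
      ∑ s ∈ Finset.range (r + 1),
        (r.choose s : ℂ) * (poch a s * (-1 : ℂ) ^ (s * k₁) * poch (-(t₁ : ℂ)) (s * k₁) /
            poch c₁ s) * x ^ s *
          F2one (a + s) (b₁ + s) b₂ (c₁ + s) c₂ (t₁ - s * k₁) t₂ k₁ k₂ x y := by
  set coeff := F2oneCoeff a b₂ c₁ c₂ t₁ t₂ k₁ k₂ x y
  have hexpand : F2one a (b₁ + r) b₂ c₁ c₂ t₁ t₂ k₁ k₂ x y =
      ∑ s ∈ range (r + 1), (r.choose s : ℂ) * ∑ m ∈ range (t₁ + 1), ∑ n ∈ range (t₂ + 1),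
        m.descFactorial s * poch (b₁ + s) (m - s) * coeff m n := by
    simp only [F2one_eq_sum_poch_mul_coeff, poch_add_natCast_eq_sum b₁ r, sum_mul, mul_sum, mul_assoc]
    exact sum_comm_cycle
  rw [hexpand]
  refine sum_congr rfl fun s hs => ?_
  have hsk : s * k₁ ≤ t₁ := (Nat.mul_le_mul_right k₁ (Nat.lt_succ_iff.mp (mem_range.mp hs))).trans hr
  have hss : s ≤ s * k₁ := Nat.le_mul_of_pos_right s hk₁
  rw [sum_range_eq_sum_range_add (s := s) (L := t₁ - s * k₁ + 1) (by omega)]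
  · rw [F2one_eq_sum_poch_mul_coeff, mul_sum, mul_sum]
    refine sum_congr rfl fun u _ => ?_
    rw [mul_sum, mul_sum]
    refine sum_congr rfl fun n _ => ?_
    rw [Nat.add_sub_cancel_left, mul_right_comm, descFactorial_mul_F2oneCoeff_add hsk]
    ring
  · intro m hm
    simp [Nat.descFactorial_eq_zero_iff_lt.mpr hm]
  · intro m hm
    obtain ⟨v, rfl⟩ := Nat.exists_eq_add_of_le (le_of_add_le_left hm)
    have hvk : v ≤ v * k₁ := Nat.le_mul_of_pos_right v hk₁
    have hlarge : t₁ < (s + v) * k₁ := by rw [add_mul]; omega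
    simp [coeff, F2oneCoeff_eq_zero hlarge]

/-- The finite summation formula (paper's (5.1)):
`𝓕₂⁽¹⁾(a, b₁+r, b₂; c₁, c₂; t₁, t₂, k₁, k₂, x, y)
 = Σ_{s=0}^{r} C(r,s) ((a)_s (−1)^{s k₁} (−t₁)_{s k₁} / (c₁)_s) x^s ·
   𝓕₂⁽¹⁾(a+s, b₁+s, b₂; c₁+s, c₂; t₁−s k₁, t₂, k₁, k₂, x, y)` for `r k₁ ≤ t₁`. -/
theorem finite_summation_formula (a b₁ b₂ c₁ c₂ : ℂ) (k₁ k₂ : ℕ)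
    (hk₁ : 0 < k₁) (hk₂ : 0 < k₂)
    (hc₁ : ∀ n : ℕ, c₁ ≠ -(n : ℂ)) (hc₂ : ∀ n : ℕ, c₂ ≠ -(n : ℂ))
    (t₁ t₂ : ℕ) (r : ℕ) (hr : r * k₁ ≤ t₁) (x y : ℂ) :
    F2one a (b₁ + r) b₂ c₁ c₂ t₁ t₂ k₁ k₂ x y =
      ∑ s ∈ Finset.range (r + 1),
        (r.choose s : ℂ) * (poch a s * (-1 : ℂ) ^ (s * k₁) * poch (-(t₁ : ℂ)) (s * k₁) /
            poch c₁ s) * x ^ s *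
          F2one (a + s) (b₁ + s) b₂ (c₁ + s) c₂ (t₁ - s * k₁) t₂ k₁ k₂ x y :=
  finite_summation_formula_general a b₁ b₂ c₁ c₂ k₁ k₂ hk₁ t₁ t₂ r hr x y
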